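/- arXiv:1606.00640 — 3 statements merged into one kernel-verified Lean document; each statement's English description precedes it below -/
import Mathlib

section
/- For κ ∈ ℝ with κ < 1 and n a negative integer, the function z = x + iy ↦ Γ(1-κ, -4πny)·e^{2πinz} on the upper half-plane is annihilated by the weight κ hyperbolic Laplacian Δ_κ. -/
noncomputable section

open Real

def dX (F : ℂ → ℂ) (z : ℂ) : ℂ := fderiv ℝ F z 1

def dY (F : ℂ → ℂ) (z : ℂ) : ℂ := fderiv ℝ F z Complex.I

def hypLap (κ : ℝ) (F : ℂ → ℂ) (z : ℂ) : ℂ :=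
  -(z.im : ℂ) ^ 2 * (dX (dX F) z + dY (dY F) z)
    + Complex.I * (κ : ℂ) * (z.im : ℂ) * (dX F z + Complex.I * dY F z)

/-- The incomplete gamma function Γ(j, v) := ∫_v^∞ t^{j-1} e^{-t} dt. -/
def incGamma (j v : ℝ) : ℝ := ∫ t in Set.Ioi v, t ^ (j - 1) * Real.exp (-t)

open MeasureTheory Set

lemma incG_integrableOn (j : ℝ) {b : ℝ} (hb : 0 < b) :
    IntegrableOn (fun t : ℝ => t ^ (j - 1) * Real.exp (-t)) (Ioi b) := by
  apply integrable_of_isBigO_exp_neg (b := 1/2) one_half_pos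
  · apply ContinuousOn.mul
    · exact fun x hx => ((Real.continuousAt_rpow_const x _ (Or.inl (hb.trans_le hx).ne')).continuousWithinAt)
    · exact (Real.continuous_exp.comp continuous_neg).continuousOn
  · have h := tendsto_rpow_mul_exp_neg_mul_atTop_nhds_zero (j-1) (1/2) one_half_pos
    rw [Asymptotics.isBigO_iff]
    refine ⟨1, ?_⟩
    filter_upwards [h.eventually (eventually_le_nhds (by norm_num : (0:ℝ) < 1)),
      Filter.eventually_ge_atTop 0] with x hx hx0
    rw [Real.norm_eq_abs, Real.norm_eq_abs, abs_of_nonneg (Real.exp_pos _).le,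
      abs_of_nonneg (by positivity : (0:ℝ) ≤ x ^ (j-1) * Real.exp (-x))]
    have e1 : x ^ (j-1) * Real.exp (-x) = (x ^ (j-1) * Real.exp (-(1/2)*x)) * Real.exp (-(1/2)*x) := by
      rw [mul_assoc, ← Real.exp_add]; ring_nf
    rw [e1]
    exact mul_le_mul_of_nonneg_right hx (Real.exp_pos _).le |>.trans (by rw [one_mul])

lemma incGamma_hasDerivAt (j : ℝ) {v : ℝ} (hv : 0 < v) :
    HasDerivAt (incGamma j) (-(v ^ (j - 1) * Real.exp (-v))) v := by
  set f : ℝ → ℝ := fun t => t ^ (j - 1) * Real.exp (-t) with hf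
  set b := v/2 with hbdef
  have hb : 0 < b := by positivity
  have hbv : b < v := by rw [hbdef]; linarith
  have hint : IntegrableOn f (Ioi b) := incG_integrableOn j hb
  have hcont : ContinuousAt f v := by
    apply ContinuousAt.mul
    · exact Real.continuousAt_rpow_const v _ (Or.inl hv.ne')
    · exact (Real.continuous_exp.comp continuous_neg).continuousAt
  have key : HasDerivAt (fun u => ∫ x in b..u, f x) (f v) v :=
    intervalIntegral.integral_hasDerivAt_right
      (intervalIntegrable_iff.2 (hint.mono_set (by rw [uIoc_of_le hbv.le]; exact Ioc_subset_Ioi_self)))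
      ⟨Ioi b, Ioi_mem_nhds hbv, hint.aestronglyMeasurable⟩ hcont
  have heq : ∀ᶠ u in nhds v, incGamma j b - ∫ x in b..u, f x = incGamma j u := by
    filter_upwards [Ioi_mem_nhds hbv] with u (hu : b < u)
    have hsplit : Ioc b u ∪ Ioi u = Ioi b := Ioc_union_Ioi_eq_Ioi hu.le
    have : incGamma j b = (∫ x in Ioc b u, f x) + ∫ x in Ioi u, f x := by
      rw [incGamma, ← hsplit, setIntegral_union Ioc_disjoint_Ioi_same measurableSet_Ioi
        (hint.mono_set (by rw [← hsplit]; exact subset_union_left))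
        (hint.mono_set (by rw [← hsplit]; exact subset_union_right))]
    rw [this, intervalIntegral.integral_of_le hu.le, incGamma]
    abel
  have : HasDerivAt (fun u => incGamma j b - ∫ x in b..u, f x) (-(f v)) v :=
    (key.const_sub _)
  exact this.congr_of_eventuallyEq (by filter_upwards [heq] with u hu using hu.symm)

def Pf (u : ℝ → ℝ) (b a : ℂ) : ℂ → ℂ := fun w => ((u w.im : ℝ) : ℂ) * (b * Complex.exp (a * w))

lemma hasFDerivAt_Pf (u : ℝ → ℝ) (b a : ℂ) {u' : ℝ} {z : ℂ} (hu : HasDerivAt u u' z.im) :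
    HasFDerivAt (Pf u b a)
      ((((u z.im : ℝ) : ℂ)) • ((ContinuousLinearMap.smulRight (1 : ℂ →L[ℂ] ℂ)
          (b * (Complex.exp (a * z) * a))).restrictScalars ℝ)
        + (b * Complex.exp (a * z)) • (Complex.ofRealCLM.comp
          (((1 : ℝ →L[ℝ] ℝ).smulRight u').comp Complex.imCLM))) z := by
  have h1 : HasFDerivAt (fun w : ℂ => ((u w.im : ℝ) : ℂ))
      (Complex.ofRealCLM.comp (((1 : ℝ →L[ℝ] ℝ).smulRight u').comp Complex.imCLM)) z :=
    Complex.ofRealCLM.hasFDerivAt.comp z ((hu.hasFDerivAt).comp z Complex.imCLM.hasFDerivAt)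
  have h2 : HasDerivAt (fun w : ℂ => b * Complex.exp (a * w)) (b * (Complex.exp (a * z) * a)) z := by
    have : HasDerivAt (fun w : ℂ => a * w) a z := by
      simpa using (hasDerivAt_id z).const_mul a
    exact (this.cexp).const_mul b
  exact h1.mul (h2.hasFDerivAt.restrictScalars ℝ)

lemma dX_Pf (u : ℝ → ℝ) (b a : ℂ) {u' : ℝ} {z : ℂ} (hu : HasDerivAt u u' z.im) :
    dX (Pf u b a) z = Pf u (b * a) a z := by
  rw [dX, (hasFDerivAt_Pf u b a hu).fderiv]
  simp only [Pf, ContinuousLinearMap.add_apply, ContinuousLinearMap.coe_smul', Pi.smul_apply,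
    ContinuousLinearMap.coe_restrictScalars', ContinuousLinearMap.smulRight_apply,
    ContinuousLinearMap.one_apply, ContinuousLinearMap.coe_comp', Function.comp_apply,
    Complex.imCLM_apply, Complex.ofRealCLM_apply, smul_eq_mul, one_smul, Complex.one_im,
    Complex.ofReal_zero, zero_mul, mul_zero, add_zero, zero_add]
  ring

lemma dY_Pf (u : ℝ → ℝ) (b a : ℂ) {u' : ℝ} {z : ℂ} (hu : HasDerivAt u u' z.im) :
    dY (Pf u b a) z = ((u' : ℝ) : ℂ) * (b * Complex.exp (a * z)) + Pf u (b * (a * Complex.I)) a z := by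
  rw [dY, (hasFDerivAt_Pf u b a hu).fderiv]
  simp only [Pf, ContinuousLinearMap.add_apply, ContinuousLinearMap.coe_smul', Pi.smul_apply,
    ContinuousLinearMap.coe_restrictScalars', ContinuousLinearMap.smulRight_apply,
    ContinuousLinearMap.one_apply, ContinuousLinearMap.coe_comp', Function.comp_apply,
    Complex.imCLM_apply, Complex.ofRealCLM_apply, smul_eq_mul, one_smul, Complex.I_im,
    Complex.ofReal_one, mul_one]
  ring

/-- For κ < 1 and n < 0 an integer, the function
z ↦ Γ(1-κ, -4πny) e^{2πinz} is annihilated by Δ_κ on ℍ. -/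
theorem hypLap_incGamma_term (κ : ℝ) (hκ : κ < 1) (n : ℤ) (hn : n < 0) :
    ∀ z : ℂ, 0 < z.im →
      hypLap κ (fun w =>
        ((incGamma (1 - κ) (-4 * π * (n : ℝ) * w.im) : ℝ) : ℂ) *
          Complex.exp (2 * (π : ℂ) * Complex.I * (n : ℂ) * w)) z = 0 := by
  intro z hz
  set c : ℝ := -4 * π * (n : ℝ) with hc_def
  have hc : 0 < c := by
    have : (n : ℝ) < 0 := by exact_mod_cast hn
    have hπ := Real.pi_pos
    rw [hc_def]; nlinarith
  set a : ℂ := 2 * (π : ℂ) * Complex.I * (n : ℂ) with ha_def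
  set g : ℝ → ℝ := fun y => incGamma (1 - κ) (c * y) with hg_def
  set g₁ : ℝ → ℝ := fun y => -((c * y) ^ (1 - κ - 1) * Real.exp (-(c * y))) * c with hg₁_def
  set g₂ : ℝ → ℝ := fun y =>
    -((-κ) * (c * y) ^ (-κ - 1) * c * Real.exp (-(c * y))
      + (c * y) ^ (-κ) * (Real.exp (-(c * y)) * (-c))) * c with hg₂_def
  -- derivative facts
  have hgd : ∀ y : ℝ, 0 < y → HasDerivAt g (g₁ y) y := by
    intro y hy
    have hcy : 0 < c * y := mul_pos hc hy
    have h1 : HasDerivAt (fun y : ℝ => c * y) c y := by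
      simpa using (hasDerivAt_id y).const_mul c
    have := (incGamma_hasDerivAt (1 - κ) hcy).comp y h1
    refine this.congr_deriv ?_
    simp [hg₁_def]
  have hg₁d : ∀ y : ℝ, 0 < y → HasDerivAt g₁ (g₂ y) y := by
    intro y hy
    have hcy : 0 < c * y := mul_pos hc hy
    have h1 : HasDerivAt (fun y : ℝ => c * y) c y := by
      simpa using (hasDerivAt_id y).const_mul c
    have h2 := h1.rpow_const (p := 1 - κ - 1) (Or.inl hcy.ne')
    have h3 : HasDerivAt (fun y : ℝ => Real.exp (-(c * y))) (Real.exp (-(c * y)) * (-c)) y := by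
      simpa using (h1.neg).exp
    have h4 := ((h2.mul h3).neg).mul_const c
    have h5 : HasDerivAt g₁ (g₂ y) y := by
      refine h4.congr_deriv ?_
      rw [hg₂_def]
      rw [show (1 : ℝ) - κ - 1 = -κ by ring]
      ring
    exact h5
  -- the real ODE identity
  have hode : ∀ y : ℝ, 0 < y → y ^ 2 * g₂ y + (c * y ^ 2 + κ * y) * g₁ y = 0 := by
    intro y hy
    have hcy : 0 < c * y := mul_pos hc hy
    have hr : (c * y) ^ (-κ - 1) = (c * y) ^ (-κ) / (c * y) := by
      rw [← Real.rpow_sub_one hcy.ne']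
    have he1 : (1 : ℝ) - κ - 1 = -κ := by ring
    rw [hg₁_def, hg₂_def]
    simp only [he1, hr]
    field_simp
    ring
  -- set-up: the function is Pf g 1 a
  have hfun : (fun w =>
        ((incGamma (1 - κ) (-4 * π * (n : ℝ) * w.im) : ℝ) : ℂ) *
          Complex.exp (2 * (π : ℂ) * Complex.I * (n : ℂ) * w)) = Pf g 1 a := by
    funext w
    rw [Pf, hg_def, one_mul, ← hc_def, ← ha_def]
  rw [hfun]
  -- eventual hypotheses
  have hU : {w : ℂ | 0 < w.im} ∈ nhds z := (isOpen_Ioi.preimage Complex.continuous_im).mem_nhds hz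
  have hgz : HasDerivAt g (g₁ z.im) z.im := hgd z.im hz
  have hg₁z : HasDerivAt g₁ (g₂ z.im) z.im := hg₁d z.im hz
  -- first derivatives
  have hdX : dX (Pf g 1 a) z = Pf g (1 * a) a z := dX_Pf g 1 a hgz
  have hdY : dY (Pf g 1 a) z = ((g₁ z.im : ℝ) : ℂ) * (1 * Complex.exp (a * z)) + Pf g (1 * (a * Complex.I)) a z :=
    dY_Pf g 1 a hgz
  -- second derivatives
  have hevX : (fun w => dX (Pf g 1 a) w) =ᶠ[nhds z] Pf g (1 * a) a := by
    filter_upwards [hU] with w hw using dX_Pf g 1 a (hgd w.im hw)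
  have hdXdX : dX (dX (Pf g 1 a)) z = Pf g (1 * a * a) a z := by
    rw [dX, hevX.fderiv_eq, ← dX]
    exact dX_Pf g (1 * a) a hgz
  have hevY : (fun w => dY (Pf g 1 a) w) =ᶠ[nhds z]
      (fun w => Pf g₁ 1 a w + Pf g (1 * (a * Complex.I)) a w) := by
    filter_upwards [hU] with w hw
    rw [dY_Pf g 1 a (hgd w.im hw)]
    simp only [Pf]
  have hdiff1 : DifferentiableAt ℝ (Pf g₁ 1 a) z := (hasFDerivAt_Pf g₁ 1 a hg₁z).differentiableAt
  have hdiff2 : DifferentiableAt ℝ (Pf g (1 * (a * Complex.I)) a) z :=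
    (hasFDerivAt_Pf g (1 * (a * Complex.I)) a hgz).differentiableAt
  have hdYdY : dY (dY (Pf g 1 a)) z =
      (((g₂ z.im : ℝ) : ℂ) * (1 * Complex.exp (a * z)) + Pf g₁ (1 * (a * Complex.I)) a z)
      + (((g₁ z.im : ℝ) : ℂ) * ((1 * (a * Complex.I)) * Complex.exp (a * z))
          + Pf g (1 * (a * Complex.I) * (a * Complex.I)) a z) := by
    rw [dY, hevY.fderiv_eq, fderiv_fun_add hdiff1 hdiff2]
    rw [ContinuousLinearMap.add_apply]
    rw [← dY, ← dY, dY_Pf g₁ 1 a hg₁z, dY_Pf g (1 * (a * Complex.I)) a hgz]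
  -- finish
  have hode' : ((z.im : ℝ) : ℂ) ^ 2 * ((g₂ z.im : ℝ) : ℂ)
      + ((c : ℂ) * ((z.im : ℝ) : ℂ) ^ 2 + (κ : ℂ) * ((z.im : ℝ) : ℂ)) * ((g₁ z.im : ℝ) : ℂ) = 0 := by
    exact_mod_cast congrArg (Complex.ofReal) (hode z.im hz)
  rw [hypLap, hdXdX, hdYdY, hdX, hdY]
  simp only [Pf]
  have hcc : (c : ℂ) = -4 * (π : ℂ) * (n : ℂ) := by
    rw [hc_def]; push_cast; ring
  rw [ha_def]
  set e : ℂ := Complex.exp (2 * (π : ℂ) * Complex.I * (n : ℂ) * z) with he_def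
  linear_combination (-e) * hode'
    + ((z.im : ℂ) ^ 2 * ((g₁ z.im : ℝ) : ℂ) * e) * hcc
    + (((-4 * (π:ℂ) * (n:ℂ) * (z.im:ℂ)^2 + (κ:ℂ) * (z.im:ℂ)) * ((g₁ z.im : ℝ):ℂ) * e
        + Complex.I^2 * (-4 * (π:ℂ)^2 * (n:ℂ)^2 * (z.im:ℂ)^2 + 2*(π:ℂ)*(n:ℂ)*(κ:ℂ)*(z.im:ℂ)) * ((g z.im : ℝ):ℂ) * e)) * Complex.I_sq
end
end

section
/- The xi-operator intertwines the slash actions: if F : ℍ → ℂ is smooth, κ ∈ ℤ, and M ∈ SL₂(ℝ), then ξ_κ(F|_κ M) = (ξ_κ F)|_{2-κ} M. In particular, if F satisfies F|_κ M = F for all M in a subgroup Γ ⊆ SL₂(ℤ), then ξ_κ(F)|_{2-κ} M = ξ_κ(F) for all M ∈ Γ. -/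
noncomputable section

def dZbar (F : ℂ → ℂ) (z : ℂ) : ℂ := (dX F z + Complex.I * dY F z) / 2

/-- ξ_κ(F)(z) := 2i y^κ conj(∂F/∂z̄)(z). -/
def xiOp (κ : ℝ) (F : ℂ → ℂ) (z : ℂ) : ℂ :=
  2 * Complex.I * ((z.im ^ κ : ℝ) : ℂ) * (starRingEnd ℂ) (dZbar F z)

/-- The weight κ slash action of M ∈ SL₂(ℝ): f|_κ M(z) = (cz+d)^{-κ} f(Mz). -/
def slash (κ : ℤ) (M : Matrix.SpecialLinearGroup (Fin 2) ℝ) (f : ℂ → ℂ) (z : ℂ) : ℂ :=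
  ((M.1 1 0 : ℂ) * z + (M.1 1 1 : ℂ)) ^ (-κ) *
    f (((M.1 0 0 : ℂ) * z + (M.1 0 1 : ℂ)) / ((M.1 1 0 : ℂ) * z + (M.1 1 1 : ℂ)))

open Complex in

lemma fderiv_real_of_cdiff {w : ℂ → ℂ} {z : ℂ} (hw : DifferentiableAt ℂ w z) (v : ℂ) :
    fderiv ℝ w z v = v * deriv w z := by
  rw [hw.fderiv_restrictScalars ℝ]
  show fderiv ℂ w z v = v * deriv w z
  rw [show deriv w z = fderiv ℂ w z 1 from rfl, ← smul_eq_mul, ← map_smul]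
  simp

lemma clm_apply_eq (L : ℂ →L[ℝ] ℂ) (v : ℂ) : L v = v.re • L 1 + v.im • L Complex.I := by
  rw [← map_smul, ← map_smul, ← map_add]
  congr 1
  simp [Complex.real_smul, Complex.re_add_im]

lemma dZbar_holo {g : ℂ → ℂ} {z : ℂ} (hg : DifferentiableAt ℂ g z) : dZbar g z = 0 := by
  rw [dZbar, dX, dY, fderiv_real_of_cdiff hg, fderiv_real_of_cdiff hg, one_mul,
    ← mul_assoc, Complex.I_mul_I]
  ring

lemma dZbar_mul {g h : ℂ → ℂ} {z : ℂ} (hg : DifferentiableAt ℝ g z)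
    (hh : DifferentiableAt ℝ h z) :
    dZbar (fun x => g x * h x) z = g z * dZbar h z + dZbar g z * h z := by
  simp only [dZbar, dX, dY, fderiv_fun_mul hg hh, ContinuousLinearMap.add_apply,
    ContinuousLinearMap.smul_apply, smul_eq_mul]
  ring

lemma conj_eq' (p : ℂ) : (starRingEnd ℂ) p = (p.re : ℂ) - p.im * Complex.I := by
  simp [Complex.ext_iff]

lemma dZbar_comp {f w : ℂ → ℂ} {z : ℂ} (hf : DifferentiableAt ℝ f (w z))
    (hw : DifferentiableAt ℂ w z) :
    dZbar (fun x => f (w x)) z = (starRingEnd ℂ) (deriv w z) * dZbar f (w z) := by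
  have hc : fderiv ℝ (fun x => f (w x)) z = (fderiv ℝ f (w z)).comp (fderiv ℝ w z) :=
    fderiv_comp z hf (hw.restrictScalars ℝ)
  set L := fderiv ℝ f (w z) with hL
  set p := deriv w z with hp
  have h1 : dX (fun x => f (w x)) z = L (1 * p) := by
    rw [dX, hc]; simp [ContinuousLinearMap.comp_apply, fderiv_real_of_cdiff hw]; rfl
  have h2 : dY (fun x => f (w x)) z = L (Complex.I * p) := by
    rw [dY, hc]; simp [ContinuousLinearMap.comp_apply, fderiv_real_of_cdiff hw]; rfl
  have e1 : L (1 * p) = p.re • L 1 + p.im • L Complex.I := by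
    rw [one_mul, clm_apply_eq L p]
  have e2 : L (Complex.I * p) = (-p.im) • L 1 + p.re • L Complex.I := by
    rw [clm_apply_eq L (Complex.I * p)]
    simp [Complex.mul_re, Complex.mul_im]
  simp only [dZbar, dX, dY] at *
  rw [h1, h2, e1, e2, conj_eq' p]
  simp only [Complex.real_smul, smul_eq_mul, Complex.ofReal_neg]
  ring_nf
  rw [Complex.I_sq]
  ring

open Complex in
lemma xi_slash_main (κ : ℤ) (F : ℂ → ℂ) (hF : ContDiff ℝ (⊤ : ℕ∞) F)
    (M : Matrix.SpecialLinearGroup (Fin 2) ℝ) (z : ℂ) (hz : 0 < z.im) :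
    xiOp (κ : ℝ) (slash κ M F) z = slash (2 - κ) M (xiOp (κ : ℝ) F) z := by
  set a : ℝ := M.1 0 0 with ha
  set b : ℝ := M.1 0 1 with hb
  set c : ℝ := M.1 1 0 with hcc
  set d : ℝ := M.1 1 1 with hd
  have hdet : a * d - b * c = 1 := by
    have := M.2
    rw [Matrix.det_fin_two] at this
    exact this
  set j : ℂ := (c : ℂ) * z + d with hjdef
  have hj : j ≠ 0 := by
    intro h
    rcases eq_or_ne c 0 with hc0 | hc0
    · have hd0 : d = 0 := by
        have : ((d:ℂ)) = 0 := by simpa [hjdef, hc0] using h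
        exact_mod_cast this
      rw [hc0, hd0] at hdet; simp at hdet
    · have : j.im = c * z.im := by simp [hjdef]
      rw [h] at this
      simp at this
      rcases this with h1 | h1
      · exact hc0 h1
      · linarith
  set w : ℂ → ℂ := fun x => ((a : ℂ) * x + b) / ((c : ℂ) * x + d) with hwdef
  have hnum : DifferentiableAt ℂ (fun x : ℂ => (a : ℂ) * x + b) z := by fun_prop
  have hden : DifferentiableAt ℂ (fun x : ℂ => (c : ℂ) * x + d) z := by fun_prop
  have hw : DifferentiableAt ℂ w z := hnum.div hden hj
  have hderivnum : HasDerivAt (fun x : ℂ => (a : ℂ) * x + b) (a : ℂ) z := by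
    simpa using ((hasDerivAt_id z).const_mul (a : ℂ)).add_const (b : ℂ)
  have hderivden : HasDerivAt (fun x : ℂ => (c : ℂ) * x + d) (c : ℂ) z := by
    simpa using ((hasDerivAt_id z).const_mul (c : ℂ)).add_const (d : ℂ)
  have hderivw : deriv w z = 1 / j ^ 2 := by
    rw [hwdef]
    rw [deriv_fun_div hnum hden hj]
    rw [hderivnum.deriv, hderivden.deriv]
    have hdetC : (a:ℂ) * d - b * c = 1 := by exact_mod_cast congrArg (Complex.ofReal) hdet
    have : (a:ℂ) * ((c:ℂ) * z + d) - ((a:ℂ) * z + b) * c = 1 := by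
      linear_combination hdetC
    rw [← hjdef] at *
    rw [this]
  have hFd : ∀ x, DifferentiableAt ℝ F x := fun x => (hF.differentiable (by simp)).differentiableAt
  have hg : DifferentiableAt ℂ (fun x : ℂ => ((c:ℂ) * x + d) ^ (-κ)) z :=
    hden.zpow (Or.inl hj)
  have hslash : dZbar (slash κ M F) z
      = j ^ (-κ) * ((starRingEnd ℂ) (1 / j ^ 2) * dZbar F (w z)) := by
    have h1 : slash κ M F = fun x => (((c:ℂ) * x + d) ^ (-κ)) * (F (w x)) := rfl
    have hFw : DifferentiableAt ℝ (fun x => F (w x)) z := by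
      exact DifferentiableAt.comp z (hFd (w z)) (hw.restrictScalars ℝ)
    rw [h1, dZbar_mul (hg.restrictScalars ℝ) hFw,
      dZbar_comp (hFd (w z)) hw, dZbar_holo hg, hderivw]
    ring
  have hcj : (starRingEnd ℂ) j ≠ 0 := by simpa using hj
  have hN : Complex.normSq j ≠ 0 := (Complex.normSq_pos.mpr hj).ne'
  have him : (w z).im = z.im / Complex.normSq j := by
    have hns : Complex.normSq j = (c * z.re + d)^2 + (c * z.im)^2 := by
      rw [hjdef]; simp [Complex.normSq_apply]; ring
    rw [hwdef]
    simp only [Complex.div_im, Complex.add_im, Complex.add_re, Complex.mul_im, Complex.mul_re,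
      Complex.ofReal_re, Complex.ofReal_im]
    rw [show ((c:ℂ) * z + (d:ℂ)) = j from rfl, hns]
    have hNS : (c * z.re + d) ^ 2 + (c * z.im) ^ 2 ≠ 0 := by rw [← hns]; exact hN
    rw [div_sub_div_same, div_eq_div_iff hNS hNS]
    linear_combination z.im * ((c * z.re + d) ^ 2 + (c * z.im) ^ 2) * hdet
  have hrp1 : z.im ^ ((κ:ℤ):ℝ) = z.im ^ κ := Real.rpow_intCast z.im κ
  have hrp2 : (z.im / Complex.normSq j) ^ ((κ:ℤ):ℝ) = (z.im / Complex.normSq j) ^ κ :=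
    Real.rpow_intCast _ κ
  have hr : slash (2 - κ) M (xiOp (κ:ℝ) F) z
      = j ^ (-(2 - κ)) * (2 * Complex.I * (((w z).im ^ ((κ:ℤ):ℝ) : ℝ) : ℂ) *
        (starRingEnd ℂ) (dZbar F (w z))) := rfl
  rw [hr, him, hrp2]
  simp only [xiOp]
  rw [hslash, hrp1]
  push_cast
  rw [show ((Complex.normSq j : ℝ) : ℂ) = j * (starRingEnd ℂ) j from (Complex.mul_conj j).symm]
  simp only [map_mul, map_zpow₀, Complex.conj_conj, map_div₀, map_one, map_pow]
  clear_value j w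
  rw [neg_sub, zpow_sub₀ hj, div_zpow, mul_zpow, zpow_neg]
  have hjk : (j:ℂ) ^ κ ≠ 0 := zpow_ne_zero _ hj
  have hcjk : ((starRingEnd ℂ) j) ^ κ ≠ 0 := zpow_ne_zero _ hcj
  field_simp

/-- ξ_κ intertwines the weight κ and weight 2-κ slash actions; in particular
it preserves invariance under any subgroup Γ of SL₂(ℤ). -/
theorem xi_slash_commute (κ : ℤ) (F : ℂ → ℂ) (hF : ContDiff ℝ (⊤ : ℕ∞) F) :
    (∀ M : Matrix.SpecialLinearGroup (Fin 2) ℝ, ∀ z : ℂ, 0 < z.im →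
        xiOp (κ : ℝ) (slash κ M F) z = slash (2 - κ) M (xiOp (κ : ℝ) F) z) ∧
      (∀ Γ : Subgroup (Matrix.SpecialLinearGroup (Fin 2) ℤ),
        (∀ M ∈ Γ, ∀ z : ℂ, 0 < z.im →
          slash κ (Matrix.SpecialLinearGroup.map (Int.castRingHom ℝ) M) F z = F z) →
        ∀ M ∈ Γ, ∀ z : ℂ, 0 < z.im →
          slash (2 - κ) (Matrix.SpecialLinearGroup.map (Int.castRingHom ℝ) M)
            (xiOp (κ : ℝ) F) z = xiOp (κ : ℝ) F z) := by
  refine ⟨fun M z hz => xi_slash_main κ F hF M z hz, ?_⟩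
  intro Γ hΓ M hM z hz
  set M' := Matrix.SpecialLinearGroup.map (Int.castRingHom ℝ) M with hM'
  rw [← xi_slash_main κ F hF M' z hz]
  have heq : slash κ M' F =ᶠ[nhds z] F := by
    have hopen : IsOpen {x : ℂ | 0 < x.im} := isOpen_lt continuous_const Complex.continuous_im
    filter_upwards [hopen.mem_nhds hz] with x hx
    exact hΓ M hM x hx
  unfold xiOp dZbar dX dY
  rw [heq.fderiv_eq]
end
end

section
/- A prime p with p ≡ 1 (mod 6) can be represented as p = c² - cd + d² with c, d ∈ ℤ. -/
/-!
Since `6 ∣ p - 1`, there is `ω` modulo `p` with `ω² - ω + 1 ≡ 0` (a primitive sixth root of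
unity). By Thue's pigeonhole argument there are `x, y`, not both zero, with `|x|, |y| ≤ √p` and
`x ≡ ω y (mod p)`. Then `p ∣ x² - xy + y²`, and `0 < x² - xy + y² < 3p`; the value `2p` is
impossible because the form never takes values `≡ 2 (mod 4)`.
-/

theorem ZMod.exists_abs_le_sqrt_intCast_eq_mul (n : ℕ) [NeZero n] (ω : ZMod n) :
    ∃ x y : ℤ, (x ≠ 0 ∨ y ≠ 0) ∧ |x| ≤ n.sqrt ∧ |y| ≤ n.sqrt ∧ (x : ZMod n) = ω * y := by
  set s := n.sqrt
  have hcard : Fintype.card (ZMod n) < Fintype.card (Fin (s + 1) × Fin (s + 1)) := by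
    simpa [ZMod.card] using Nat.lt_succ_sqrt n
  obtain ⟨⟨a, b⟩, ⟨a', b'⟩, hne, heq⟩ := Fintype.exists_ne_map_eq_of_card_lt
    (fun ab : Fin (s + 1) × Fin (s + 1) => ((ab.1 : ℕ) : ZMod n) - ω * (ab.2 : ℕ)) hcard
  have ha := a.isLt
  have ha' := a'.isLt
  have hb := b.isLt
  have hb' := b'.isLt
  refine ⟨(a : ℤ) - a', (b : ℤ) - b', ?_, ?_, ?_, ?_⟩
  · by_contra! h
    exact hne (Prod.ext (Fin.ext (by dsimp; omega)) (Fin.ext (by dsimp; omega)))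
  · rw [abs_le]; omega
  · rw [abs_le]; omega
  · push_cast
    linear_combination heq

theorem ZMod.exists_sq_sub_add_one_eq_zero {p : ℕ} [Fact p.Prime] (hp : p % 3 = 1) :
    ∃ ω : ZMod p, ω ^ 2 - ω + 1 = 0 := by
  have h3 : 3 ∣ Fintype.card (ZMod p)ˣ := by
    rw [ZMod.card_units]
    omega
  have : Fact (Nat.Prime 3) := ⟨Nat.prime_three⟩
  obtain ⟨u, hu⟩ := exists_prime_orderOf_dvd_card 3 h3
  have hζ : IsPrimitiveRoot (u : ZMod p) 3 :=
    IsPrimitiveRoot.coe_units_iff.mpr (hu ▸ IsPrimitiveRoot.orderOf u)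
  have hsum := hζ.geom_sum_eq_zero (by norm_num)
  simp only [Finset.sum_range_succ, Finset.sum_range_zero] at hsum
  exact ⟨-u, by linear_combination hsum⟩

theorem sq_sub_mul_add_sq_pos {x y : ℤ} (h : x ≠ 0 ∨ y ≠ 0) : 0 < x ^ 2 - x * y + y ^ 2 := by
  rcases h with h | h
  · have : 0 < x ^ 2 := by positivity
    nlinarith [sq_nonneg (x - 2 * y)]
  · have : 0 < y ^ 2 := by positivity
    nlinarith [sq_nonneg (2 * x - y)]

theorem sq_sub_mul_add_sq_le {x y s : ℤ} (hx : |x| ≤ s) (hy : |y| ≤ s) :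
    x ^ 2 - x * y + y ^ 2 ≤ 3 * s ^ 2 := by
  rw [abs_le] at hx hy
  nlinarith

theorem sq_sub_mul_add_sq_ne_two_mul_of_odd {x y n : ℤ} (hn : Odd n) :
    x ^ 2 - x * y + y ^ 2 ≠ 2 * n := by
  obtain ⟨k, rfl⟩ := hn
  intro h
  have h4 : ((x ^ 2 - x * y + y ^ 2 : ℤ) : ZMod 4) = 2 := by
    rw [h, show 2 * (2 * k + 1) = 4 * k + 2 by ring]
    push_cast
    reduce_mod_char
  push_cast at h4
  have hform : ∀ a b : ZMod 4, a ^ 2 - a * b + b ^ 2 ≠ 2 := by decide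
  exact hform x y h4

/-- A prime p ≡ 1 (mod 6) is represented by the norm form c² - cd + d². -/
theorem prime_one_mod_six_rep (p : ℕ) (hp : p.Prime) (h : p % 6 = 1) :
    ∃ c d : ℤ, c ^ 2 - c * d + d ^ 2 = (p : ℤ) := by
  have := Fact.mk hp
  obtain ⟨ω, hω⟩ := ZMod.exists_sq_sub_add_one_eq_zero (p := p) (by omega)
  obtain ⟨x, y, hxy, hx, hy, hxω⟩ := ZMod.exists_abs_le_sqrt_intCast_eq_mul p ω
  obtain ⟨k, hk⟩ : (p : ℤ) ∣ x ^ 2 - x * y + y ^ 2 := by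
    rw [← ZMod.intCast_zmod_eq_zero_iff_dvd]
    push_cast
    rw [hxω]
    linear_combination (y : ZMod p) ^ 2 * hω
  have hsqrt : ((p.sqrt : ℕ) : ℤ) ^ 2 < p := by
    have := (Nat.sqrt_le p).lt_of_ne fun hsq => hp.prime.not_isSquare ⟨_, hsq.symm⟩
    rw [sq]
    exact_mod_cast this
  have hpos := sq_sub_mul_add_sq_pos hxy
  have hle := sq_sub_mul_add_sq_le hx hy
  obtain ⟨hk0, hk3⟩ : 0 < k ∧ k < 3 := ⟨by nlinarith, by nlinarith⟩
  interval_cases k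
  · exact ⟨x, y, by simpa using hk⟩
  · refine absurd (hk.trans (mul_comm _ _)) (sq_sub_mul_add_sq_ne_two_mul_of_odd ?_)
    exact_mod_cast hp.eq_two_or_odd'.resolve_left (by omega)
end
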